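/- Let (D, 𝒜, μ) be a finite measure space, a⁻ < a⁺ real constants, p ≥ 1 a real number, and ξ : D → ℝ a measurable function whose zero level set is null, i.e. μ({x ∈ D : ξ(x) = 0}) = 0. Suppose (ξ^ε)_{ε>0} is a family of measurable functions with ξ(x) − ε ≤ ξ^ε(x) ≤ ξ(x) + ε for all x ∈ D. Then ∫_D |F_ls[ξ^ε](x) − F_ls[ξ](x)|^p dμ(x) → 0 as ε → 0⁺, where F_ls[η] := a⁻·1_{{η < 0}} + a⁺·1_{{η ≥ 0}}. (Lᵖ continuity of the level-set map under uniform perturbations when the discontinuity set is null.) -/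

import Mathlib

/-!
Where `|ξ| > ε`, a perturbation of size at most `ε` cannot change the sign of `ξ`, so the two
level-set fields agree there; elsewhere they differ by at most `|a⁺ - a⁻|`. Hence the integral
is at most `|a⁺ - a⁻|^p · μ {|ξ| ≤ ε}`, and by continuity of the finite measure `μ` from above
this tends to `μ {ξ = 0} = 0`.
-/

open MeasureTheory Filter
open scoped Topology

/-- The level-set field `F_ls[ξ] = a⁻·1_{ξ<0} + a⁺·1_{ξ≥0}`. -/
noncomputable def levelSetField {D : Type*} (aminus aplus : ℝ) (ξ : D → ℝ) (x : D) : ℝ :=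
  if ξ x < 0 then aminus else aplus

section LevelSetField

variable {D : Type*} (aminus aplus : ℝ) {ξ η : D → ℝ} {ε : ℝ} {x : D}

theorem levelSetField_eq_of_abs_sub_le (hclose : |η x - ξ x| ≤ ε) (hx : ε < |ξ x|) :
    levelSetField aminus aplus η x = levelSetField aminus aplus ξ x := by
  rw [abs_le] at hclose
  rcases lt_abs.mp hx with hpos | hneg
  · simp only [levelSetField, not_lt.mpr (by linarith : 0 ≤ ξ x),
      not_lt.mpr (by linarith : 0 ≤ η x), if_false]
  · simp only [levelSetField, (by linarith : ξ x < 0), (by linarith : η x < 0), if_true]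

theorem abs_levelSetField_sub_le (η ξ : D → ℝ) (x : D) :
    |levelSetField aminus aplus η x - levelSetField aminus aplus ξ x| ≤ |aplus - aminus| := by
  unfold levelSetField
  split_ifs <;> simp [abs_sub_comm]

theorem abs_levelSetField_sub_rpow_le_indicator {p : ℝ} (hp : 0 < p)
    (hclose : ∀ x, |η x - ξ x| ≤ ε) (x : D) :
    |levelSetField aminus aplus η x - levelSetField aminus aplus ξ x| ^ p ≤
      {x | |ξ x| ≤ ε}.indicator (fun _ => |aplus - aminus| ^ p) x := by
  by_cases hx : |ξ x| ≤ ε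
  · rw [Set.indicator_of_mem (show x ∈ {x | |ξ x| ≤ ε} from hx)]
    exact Real.rpow_le_rpow (abs_nonneg _) (abs_levelSetField_sub_le _ _ η ξ x) hp.le
  · rw [Set.indicator_of_notMem (show x ∉ {x | |ξ x| ≤ ε} from hx),
      levelSetField_eq_of_abs_sub_le _ _ (hclose x) (not_le.mp hx), sub_self, abs_zero,
      Real.zero_rpow hp.ne']

theorem integral_abs_levelSetField_sub_rpow_le [MeasurableSpace D] (μ : Measure D)
    [IsFiniteMeasure μ] {p : ℝ} (hp : 0 < p) (hξ : Measurable ξ)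
    (hclose : ∀ x, |η x - ξ x| ≤ ε) :
    ∫ x, |levelSetField aminus aplus η x - levelSetField aminus aplus ξ x| ^ p ∂μ ≤
      |aplus - aminus| ^ p * μ.real {x | |ξ x| ≤ ε} := by
  have hmeas : MeasurableSet {x | |ξ x| ≤ ε} := measurableSet_le hξ.abs measurable_const
  calc ∫ x, |levelSetField aminus aplus η x - levelSetField aminus aplus ξ x| ^ p ∂μ
      ≤ ∫ x, {x | |ξ x| ≤ ε}.indicator (fun _ => |aplus - aminus| ^ p) x ∂μ :=
        integral_mono_of_nonneg (.of_forall fun _ => by positivity)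
          ((integrable_const _).indicator hmeas)
          (.of_forall (abs_levelSetField_sub_rpow_le_indicator _ _ hp hclose))
    _ = |aplus - aminus| ^ p * μ.real {x | |ξ x| ≤ ε} := by
        rw [integral_indicator_const _ hmeas, smul_eq_mul, mul_comm]

end LevelSetField

theorem tendsto_measure_abs_le_nhdsGT_zero {D : Type*} [MeasurableSpace D] (μ : Measure D)
    [IsFiniteMeasure μ] {f : D → ℝ} (hf : Measurable f) (hnull : μ {x | f x = 0} = 0) :
    Tendsto (fun ε => μ {x | |f x| ≤ ε}) (𝓝[>] 0) (𝓝 0) := by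
  have hinter : ⋂ r > (0 : ℝ), {x | |f x| ≤ r} = {x | f x = 0} := by
    ext x
    simp only [Set.mem_iInter, Set.mem_ofPred_eq]
    exact ⟨fun h => abs_nonpos_iff.mp (le_of_forall_gt_imp_ge_of_dense h),
      fun h r hr => by simp [h, hr.le]⟩
  have := tendsto_measure_biInter_gt (μ := μ) (s := fun r : ℝ => {x | |f x| ≤ r}) (a := 0)
    (fun r _ => (measurableSet_le hf.abs measurable_const).nullMeasurableSet)
    (fun i j _ hij x hx => le_trans hx hij) ⟨1, one_pos, measure_ne_top μ _⟩
  rwa [hinter, hnull] at this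

theorem levelSetField_Lp_continuous_general
    {D : Type*} [MeasurableSpace D] (μ : Measure D) [IsFiniteMeasure μ]
    (aminus aplus : ℝ)
    (p : ℝ) (hp : 1 ≤ p)
    (ξ : D → ℝ) (hξ : Measurable ξ) (hnull : μ {x | ξ x = 0} = 0)
    (ξε : ℝ → D → ℝ)
    (hclose : ∀ ε > (0 : ℝ), ∀ x, ξ x - ε ≤ ξε ε x ∧ ξε ε x ≤ ξ x + ε) :
    Tendsto
      (fun ε => ∫ x, |levelSetField aminus aplus (ξε ε) x -
        levelSetField aminus aplus ξ x| ^ p ∂μ)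
      (𝓝[>] 0) (𝓝 0) := by
  have hp0 : 0 < p := one_pos.trans_le hp
  have hmeasure : Tendsto (fun ε => |aplus - aminus| ^ p * μ.real {x | |ξ x| ≤ ε})
      (𝓝[>] 0) (𝓝 0) := by
    simpa [measureReal_def] using ((ENNReal.tendsto_toReal ENNReal.zero_ne_top).comp
      (tendsto_measure_abs_le_nhdsGT_zero μ hξ hnull)).const_mul (|aplus - aminus| ^ p)
  refine squeeze_zero' (.of_forall fun ε => integral_nonneg fun x => by positivity) ?_ hmeasure
  filter_upwards [self_mem_nhdsWithin] with ε hε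
  refine integral_abs_levelSetField_sub_rpow_le _ _ μ hp0 hξ fun x => ?_
  obtain ⟨hlower, hupper⟩ := hclose ε hε x
  exact abs_sub_le_iff.mpr ⟨by linarith, by linarith⟩

/-- `Lᵖ` continuity of the level-set map under uniform perturbations when the
zero level set of `ξ` is null: if `ξ - ε ≤ ξ^ε ≤ ξ + ε` pointwise, then
`∫ |F_ls[ξ^ε] - F_ls[ξ]|^p dμ → 0` as `ε → 0⁺`. -/
theorem levelSetField_Lp_continuous
    {D : Type*} [MeasurableSpace D] (μ : Measure D) [IsFiniteMeasure μ]
    (aminus aplus : ℝ) (hab : aminus < aplus)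
    (p : ℝ) (hp : 1 ≤ p)
    (ξ : D → ℝ) (hξ : Measurable ξ) (hnull : μ {x | ξ x = 0} = 0)
    (ξε : ℝ → D → ℝ) (hmeas : ∀ ε > (0 : ℝ), Measurable (ξε ε))
    (hclose : ∀ ε > (0 : ℝ), ∀ x, ξ x - ε ≤ ξε ε x ∧ ξε ε x ≤ ξ x + ε) :
    Tendsto
      (fun ε => ∫ x, |levelSetField aminus aplus (ξε ε) x -
        levelSetField aminus aplus ξ x| ^ p ∂μ)
      (𝓝[>] 0) (𝓝 0) :=
  levelSetField_Lp_continuous_general μ aminus aplus p hp ξ hξ hnull ξε hclose
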